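/- arXiv:1810.09893 — 3 statements merged into one kernel-verified Lean document; each statement's English description precedes it below -/
import Mathlib

section
/- Let k ≥ 1 and suppose 2k+1 = p^e for some prime p and integer e ≥ 1. Then every circulant matrix C(a_0,…,a_{2k}) of size (2k+1)×(2k+1) whose first row consists of exactly k entries equal to 1 and k+1 entries equal to 0 is nonsingular (has nonzero determinant). -/
/-!
Reduce modulo `p`. Circulant matrices commute, and when the index group has exponent dividing
`p ^ e` the translation matrices have order dividing `p ^ e`; so in characteristic `p` the
Frobenius gives `C(v) ^ p ^ e = (∑ v_g ^ p ^ e) • 1`, whence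
`det C(v) ^ p ^ e = (∑ v_g) ^ (p ^ e * |G|)`.
For a `0/1` row with `k` ones the sum is `k`, which is nonzero mod `p` since `p ∣ 2k + 1`.
A determinant that is nonzero mod `p` is a nonzero integer, so the rational determinant is nonzero.
-/

/-- The circulant matrix whose `(i,j)` entry is `a (j - i)` (indices mod `n`). -/
def circulantMat {n : ℕ} (a : Fin n → ℚ) : Matrix (Fin n) (Fin n) ℚ :=
  Matrix.of fun i j => a (j - i)

open Matrix

theorem Finset.sum_pow_expChar_pow_of_pairwise_commute {R ι : Type*} [Semiring R] (p : ℕ)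
    [ExpChar R p] (n : ℕ) (s : Finset ι) (f : ι → R)
    (hf : (s : Set ι).Pairwise fun i j => Commute (f i) (f j)) :
    (∑ i ∈ s, f i) ^ p ^ n = ∑ i ∈ s, f i ^ p ^ n := by
  classical
  induction s using Finset.induction_on with
  | empty => simp [zero_pow (expChar_pow_pos R p n).ne']
  | insert a s ha ih =>
    rw [Finset.coe_insert, Set.pairwise_insert] at hf
    have hcomm : Commute (f a) (∑ i ∈ s, f i) :=
      Commute.sum_right _ _ _ fun i hi => (hf.2 i hi (ne_of_mem_of_not_mem hi ha).symm).1
    rw [Finset.sum_insert ha, Finset.sum_insert ha, add_pow_expChar_pow_of_commute p n hcomm,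
      ih hf.1]

namespace Matrix

variable {G R : Type*} [AddCommGroup G]

theorem circulant_sum {ι : Type*} [AddCommMonoid R] (s : Finset ι) (v : ι → G → R) :
    circulant (∑ i ∈ s, v i) = ∑ i ∈ s, circulant (v i) := by
  ext x y
  simp [circulant_apply, Matrix.sum_apply]

variable [Fintype G] [DecidableEq G]

theorem circulant_single_mul_circulant_single [Semiring R] (g h : G) (a b : R) :
    circulant (Pi.single g a) * circulant (Pi.single h b) =
      circulant (Pi.single (g + h) (a * b)) := by
  ext x y
  simp [circulant_apply, mul_apply, Pi.single_apply, sub_eq_iff_eq_add, add_assoc]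

theorem circulant_single_pow [Semiring R] (g : G) (a : R) (m : ℕ) :
    circulant (Pi.single g a) ^ m = circulant (Pi.single (m • g) (a ^ m)) := by
  induction m with
  | zero => simp
  | succ m ih => rw [pow_succ, ih, circulant_single_mul_circulant_single, succ_nsmul, pow_succ]

theorem circulant_pow_char_pow [CommRing R] (p : ℕ) [Fact p.Prime] [CharP R p] (e : ℕ)
    (hG : ∀ g : G, p ^ e • g = 0) (v : G → R) :
    circulant v ^ p ^ e = scalar G (∑ g, v g ^ p ^ e) := by
  conv_lhs => rw [← Finset.univ_sum_single v, circulant_sum]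
  rw [Finset.sum_pow_expChar_pow_of_pairwise_commute p e _ _
    fun g _ h _ _ => (circulant_mul_comm (Pi.single g (v g)) (Pi.single h (v h)) :)]
  simp_rw [circulant_single_pow, hG, circulant_single, ← map_sum]

theorem det_circulant_ne_zero_of_sum_ne_zero [CommRing R] [IsReduced R] (p : ℕ) [Fact p.Prime]
    [CharP R p] (e : ℕ) (hG : ∀ g : G, p ^ e • g = 0) {v : G → R} (hv : ∑ g, v g ≠ 0) :
    (circulant v).det ≠ 0 := by
  have hdet := congrArg det (circulant_pow_char_pow p e hG v)
  rw [det_pow, ← sum_pow_char_pow, scalar_apply, det_diagonal, Finset.prod_const,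
    Finset.card_univ, ← pow_mul] at hdet
  intro h0
  exact hv (eq_zero_of_pow_eq_zero (by rw [← hdet, h0, zero_pow (expChar_pow_pos R p e).ne']))

theorem det_map_intCast_ne_zero_of_det_map_intCast_ne_zero {n S K : Type*} [Fintype n]
    [DecidableEq n] [CommRing S] [CommRing K] [CharZero K] {M : Matrix n n ℤ}
    (h : (M.map (Int.cast : ℤ → S)).det ≠ 0) : (M.map (Int.cast : ℤ → K)).det ≠ 0 := by
  rw [← Int.cast_det] at h ⊢
  exact Int.cast_ne_zero.mpr fun h0 => h (by rw [h0, Int.cast_zero])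

end Matrix

theorem circulantMat_eq_transpose_circulant {n : ℕ} [NeZero n] (a : Fin n → ℚ) :
    circulantMat a = (circulant a)ᵀ := rfl

theorem stmt_4_general (k p e : ℕ) (hp : p.Prime) (he : 1 ≤ e)
    (hpe : 2 * k + 1 = p ^ e) (a : Fin (2 * k + 1) → ℚ)
    (ha : ∀ j, a j = 0 ∨ a j = 1)
    (hcard : (Finset.univ.filter fun j => a j = 1).card = k) :
    (circulantMat a).det ≠ 0 := by
  have : Fact p.Prime := ⟨hp⟩
  set b : Fin (2 * k + 1) → ℤ := fun j => if a j = 1 then 1 else 0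
  have hab : a = fun j => (b j : ℚ) := funext fun j => by rcases ha j with h | h <;> simp [b, h]
  have hpk : ¬ p ∣ k := fun hpk => hp.one_lt.ne' <| Nat.dvd_one.mp <|
    (Nat.dvd_add_right (hpk.mul_left 2)).mp (hpe ▸ dvd_pow_self p (by omega))
  have hsum : ∑ j, ((b j : ℤ) : ZMod p) = k := by simp [b, Finset.sum_boole, hcard]
  rw [circulantMat_eq_transpose_circulant, det_transpose, hab, ← map_circulant b]
  refine det_map_intCast_ne_zero_of_det_map_intCast_ne_zero (S := ZMod p) ?_
  rw [map_circulant]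
  refine det_circulant_ne_zero_of_sum_ne_zero p e (fun g => ?_) ?_
  · rw [← hpe]; simpa using card_nsmul_eq_zero (x := g)
  · rw [hsum]; exact (ZMod.natCast_eq_zero_iff k p).not.mpr hpk

theorem stmt_4 (k p e : ℕ) (hk : 1 ≤ k) (hp : p.Prime) (he : 1 ≤ e)
    (hpe : 2 * k + 1 = p ^ e) (a : Fin (2 * k + 1) → ℚ)
    (ha : ∀ j, a j = 0 ∨ a j = 1)
    (hcard : (Finset.univ.filter fun j => a j = 1).card = k) :
    (circulantMat a).det ≠ 0 :=
  stmt_4_general k p e hp he hpe a ha hcard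
end

section
/- Let p < q be two distinct primes and let n = p^{e_1}·q^{e_2} with e_1, e_2 ≥ 1. Let f(x) ∈ ℚ[x] with deg f(x) < n be divisible by Φ_n(x). Suppose (h_{n/p}(x), h_{n/q}(x)) and (h'_{n/p}(x), h'_{n/q}(x)) are two pairs of polynomials in ℚ[x] with deg h_{n/p} < n/p, deg h'_{n/p} < n/p, deg h_{n/q} < n/q, deg h'_{n/q} < n/q, such that f(x) = h_{n/p}(x)·G(n,n/p;x) + h_{n/q}(x)·G(n,n/q;x) = h'_{n/p}(x)·G(n,n/p;x) + h'_{n/q}(x)·G(n,n/q;x). Then there exists δ(x) ∈ ℚ[x] with deg δ(x) < n/(p·q) such that h'_{n/p}(x) = h_{n/p}(x) − δ(x)·G(n/p, n/(p·q); x) and h'_{n/q}(x) = h_{n/q}(x) + δ(x)·G(n/q, n/(p·q); x). -/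
/-!
Write `a = h_{n/p} - h'_{n/p}`, `b = h'_{n/q} - h_{n/q}` and `d = n/(pq)`. Subtracting the two
representations of `f` gives `a G(n,n/p) = b G(n,n/q)`; multiplying by `(x^{n/p}-1)(x^{n/q}-1)`
and cancelling `x^n - 1`, then `x^d - 1`, turns this into `a G(n/q,d) = b G(n/p,d)`.
These two factors are products of cyclotomic polynomials `Φ_i` over disjoint sets of indices
(a common `i` would divide `gcd(n/p, n/q) = d`), hence coprime over `ℚ`. So `a = δ G(n/p,d)` and
`b = δ G(n/q,d)`, and `deg a < n/p` forces `deg δ < d`.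
-/

open Polynomial

noncomputable def Gpoly (R : Type*) [Semiring R] (n r : ℕ) : Polynomial R :=
  ∑ l ∈ Finset.range (n / r), X ^ (l * r)

theorem Polynomial.X_pow_sub_one_ne_zero {R : Type*} [Ring R] [Nontrivial R] {n : ℕ}
    (hn : 0 < n) : (X : R[X]) ^ n - 1 ≠ 0 := by
  simpa using X_pow_sub_C_ne_zero hn (1 : R)

namespace Gpoly

theorem mul_X_pow_sub_one {R : Type*} [Ring R] {n r : ℕ} (h : r ∣ n) :
    Gpoly R n r * (X ^ r - 1) = X ^ n - 1 := by
  simp_rw [Gpoly, mul_comm _ r, pow_mul]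
  rw [geom_sum_mul, ← pow_mul, Nat.mul_div_cancel' h]

section IsDomain

variable {R : Type*} [CommRing R] [IsDomain R] {m n r s : ℕ}

theorem ne_zero (hn : 0 < n) (h : r ∣ n) : Gpoly R n r ≠ 0 :=
  left_ne_zero_of_mul (mul_X_pow_sub_one (R := R) h ▸ X_pow_sub_one_ne_zero hn)

theorem eq_prod_cyclotomic (hn : 0 < n) (h : r ∣ n) :
    Gpoly R n r = ∏ i ∈ n.divisors \ r.divisors, cyclotomic i R := by
  have hr : 0 < r := Nat.pos_of_dvd_of_pos h hn
  refine mul_right_cancel₀ (X_pow_sub_one_ne_zero (R := R) hr) ?_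
  rw [mul_X_pow_sub_one h, ← prod_cyclotomic_eq_X_pow_sub_one hn,
    ← prod_cyclotomic_eq_X_pow_sub_one hr,
    Finset.prod_sdiff (Nat.divisors_subset_of_dvd hn.ne' h)]

theorem mul_eq_mul_iff_of_dvd_left (hn : 0 < n) (hr : r ∣ n) (hs : s ∣ n) {a b : R[X]} :
    a * Gpoly R n r = b * Gpoly R n s ↔ a * (X ^ s - 1) = b * (X ^ r - 1) := by
  have hXr := X_pow_sub_one_ne_zero (R := R) (Nat.pos_of_dvd_of_pos hr hn)
  have hXs := X_pow_sub_one_ne_zero (R := R) (Nat.pos_of_dvd_of_pos hs hn)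
  rw [← mul_left_inj' (mul_ne_zero hXr hXs), show a * Gpoly R n r * ((X ^ r - 1) * (X ^ s - 1)) =
      a * (X ^ s - 1) * (Gpoly R n r * (X ^ r - 1)) by ring,
    show b * Gpoly R n s * ((X ^ r - 1) * (X ^ s - 1)) =
      b * (X ^ r - 1) * (Gpoly R n s * (X ^ s - 1)) by ring,
    mul_X_pow_sub_one hr, mul_X_pow_sub_one hs, mul_left_inj' (X_pow_sub_one_ne_zero hn)]

theorem mul_eq_mul_iff_of_dvd_right (hm : 0 < m) (hrm : r ∣ m) (hrn : r ∣ n) {a b : R[X]} :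
    a * Gpoly R m r = b * Gpoly R n r ↔ a * (X ^ m - 1) = b * (X ^ n - 1) := by
  rw [← mul_left_inj' (X_pow_sub_one_ne_zero (R := R) (Nat.pos_of_dvd_of_pos hrm hm)),
    mul_assoc, mul_assoc, mul_X_pow_sub_one hrm, mul_X_pow_sub_one hrn]

theorem degree_lt_of_eq_mul (hn : 0 < n) (h : r ∣ n) {a δ : R[X]} (ha : a.degree < n)
    (hδ : a = δ * Gpoly R n r) : δ.degree < r := by
  have hr : 0 < r := Nat.pos_of_dvd_of_pos h hn
  have key : a * (X ^ r - 1) = δ * (X ^ n - 1) := by rw [hδ, mul_assoc, mul_X_pow_sub_one h]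
  have hdeg := congrArg degree key
  rw [degree_mul, degree_mul, ← C_1, degree_X_pow_sub_C hr, degree_X_pow_sub_C hn] at hdeg
  have : δ.degree + n < r + n := by
    rw [← hdeg, add_comm (r : WithBot ℕ)]
    exact WithBot.add_lt_add_right WithBot.coe_ne_bot ha
  exact (WithBot.add_lt_add_iff_right WithBot.coe_ne_bot).1 this

end IsDomain

theorem isCoprime {d k l : ℕ} (hd : 0 < d) (hk : 0 < k) (hl : 0 < l) (hkl : k.Coprime l) :
    IsCoprime (Gpoly ℚ (k * d) d) (Gpoly ℚ (l * d) d) := by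
  rw [eq_prod_cyclotomic (by positivity) (dvd_mul_left d k),
    eq_prod_cyclotomic (by positivity) (dvd_mul_left d l)]
  refine IsCoprime.prod_left fun i hi ↦ IsCoprime.prod_right fun j hj ↦
    cyclotomic.isCoprime_rat ?_
  rintro rfl
  simp only [Finset.mem_sdiff, Nat.mem_divisors] at hi hj
  have : i ∣ d := by
    simpa [Nat.gcd_mul_right, hkl.gcd_eq_one] using Nat.dvd_gcd hi.1.1 hj.1.1
  exact hi.2 ⟨this, hd.ne'⟩

end Gpoly

theorem IsCoprime.exists_eq_mul_of_mul_eq_mul {R : Type*} [CommRing R] [IsDomain R]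
    {A B a b : R} (hAB : IsCoprime A B) (hA : A ≠ 0) (h : a * B = b * A) :
    ∃ δ, a = δ * A ∧ b = δ * B := by
  obtain ⟨δ, rfl⟩ : A ∣ a := hAB.dvd_of_dvd_mul_right ⟨b, by rw [h, mul_comm]⟩
  refine ⟨δ, mul_comm _ _, mul_left_cancel₀ hA ?_⟩
  linear_combination -h

theorem stmt_11_general (p q e₁ e₂ n : ℕ) (hp : p.Prime) (hq : q.Prime) (hpq : p < q)
    (he₁ : 1 ≤ e₁) (he₂ : 1 ≤ e₂) (hn : n = p ^ e₁ * q ^ e₂)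
    (f : Polynomial ℚ)
    (hnp hnq hnp' hnq' : Polynomial ℚ)
    (hdnp : hnp.degree < ((n / p : ℕ) : WithBot ℕ))
    (hdnp' : hnp'.degree < ((n / p : ℕ) : WithBot ℕ))
    (hf : f = hnp * Gpoly ℚ n (n / p) + hnq * Gpoly ℚ n (n / q))
    (hf' : f = hnp' * Gpoly ℚ n (n / p) + hnq' * Gpoly ℚ n (n / q)) :
    ∃ δ : Polynomial ℚ, δ.degree < ((n / (p * q) : ℕ) : WithBot ℕ) ∧
      hnp' = hnp - δ * Gpoly ℚ (n / p) (n / (p * q)) ∧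
      hnq' = hnq + δ * Gpoly ℚ (n / q) (n / (p * q)) := by
  have hp₀ := hp.pos
  have hq₀ := hq.pos
  have hn₀ : 0 < n := hn ▸ by positivity
  obtain ⟨d, rfl⟩ : p * q ∣ n :=
    hn ▸ mul_dvd_mul (dvd_pow_self p (by omega)) (dvd_pow_self q (by omega))
  have hd : 0 < d := Nat.pos_of_mul_pos_left hn₀
  have hn_p : p * q * d / p = q * d := by rw [mul_assoc, Nat.mul_div_cancel_left _ hp₀]
  have hn_q : p * q * d / q = p * d := by
    rw [mul_comm p, mul_assoc, Nat.mul_div_cancel_left _ hq₀]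
  have hn_pq : p * q * d / (p * q) = d := Nat.mul_div_cancel_left _ (by positivity)
  simp only [hn_p, hn_q, hn_pq] at hdnp hdnp' hf hf' ⊢
  have hab : (hnp - hnp') * Gpoly ℚ (p * d) d = (hnq' - hnq) * Gpoly ℚ (q * d) d := by
    rw [Gpoly.mul_eq_mul_iff_of_dvd_right (by positivity) (dvd_mul_left d p) (dvd_mul_left d q),
      ← Gpoly.mul_eq_mul_iff_of_dvd_left hn₀ ⟨p, by ring⟩ ⟨q, by ring⟩]
    linear_combination hf' - hf
  obtain ⟨δ, ha, hb⟩ := (Gpoly.isCoprime hd hq₀ hp₀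
    ((Nat.coprime_primes hq hp).2 hpq.ne')).exists_eq_mul_of_mul_eq_mul
    (Gpoly.ne_zero (by positivity) (dvd_mul_left d q)) hab
  refine ⟨δ, Gpoly.degree_lt_of_eq_mul (by positivity) (dvd_mul_left d q)
    ((degree_sub_le _ _).trans_lt (max_lt hdnp hdnp')) ha, ?_, ?_⟩
  · linear_combination -ha
  · linear_combination hb

theorem stmt_11 (p q e₁ e₂ n : ℕ) (hp : p.Prime) (hq : q.Prime) (hpq : p < q)
    (he₁ : 1 ≤ e₁) (he₂ : 1 ≤ e₂) (hn : n = p ^ e₁ * q ^ e₂)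
    (f : Polynomial ℚ) (hdeg : f.degree < (n : WithBot ℕ))
    (hdvd : cyclotomic n ℚ ∣ f)
    (hnp hnq hnp' hnq' : Polynomial ℚ)
    (hdnp : hnp.degree < ((n / p : ℕ) : WithBot ℕ))
    (hdnp' : hnp'.degree < ((n / p : ℕ) : WithBot ℕ))
    (hdnq : hnq.degree < ((n / q : ℕ) : WithBot ℕ))
    (hdnq' : hnq'.degree < ((n / q : ℕ) : WithBot ℕ))
    (hf : f = hnp * Gpoly ℚ n (n / p) + hnq * Gpoly ℚ n (n / q))
    (hf' : f = hnp' * Gpoly ℚ n (n / p) + hnq' * Gpoly ℚ n (n / q)) :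
    ∃ δ : Polynomial ℚ, δ.degree < ((n / (p * q) : ℕ) : WithBot ℕ) ∧
      hnp' = hnp - δ * Gpoly ℚ (n / p) (n / (p * q)) ∧
      hnq' = hnq + δ * Gpoly ℚ (n / q) (n / (p * q)) :=
  stmt_11_general p q e₁ e₂ n hp hq hpq he₁ he₂ hn f hnp hnq hnp' hnq' hdnp hdnp' hf hf'
end

section
/- There exists a unital polynomial f(x) ∈ ℤ[x] with deg f(x) < 105 that is divisible by Φ_105(x) but admits no unital (3,5,7)-recurrent decomposition with respect to 105: there are no unital polynomials h_{35}(x), h_{21}(x), h_{15}(x) ∈ ℤ[x] with deg h_{35} < 35, deg h_{21} < 21, deg h_{15} < 15 such that f(x) = h_{35}(x)·G(105,35;x) + h_{21}(x)·G(105,21;x) + h_{15}(x)·G(105,15;x). An explicit example is f(x) = x^5+x^6+x^{10}+x^{25}+x^{27}+x^{35}+x^{40}+x^{48}+x^{50}+x^{65}+x^{69}+x^{70}+x^{80}+x^{85}+x^{95}+x^{100}. -/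
/-!
Each `G(105, r; x)` with `r ∣ 105`, `r < 105` is a product of cyclotomic polynomials `Φ_d` with
`d ∣ 105`, `d ∤ r`, hence divisible by `Φ_105`; and `f = (1+x^5+x^10+x^15+x^25+x^30)·G(105,35)
+ x^6·G(105,21) - G(105,15)`, a decomposition that is not unital only because of the `-1`.

For `deg h < r`, the coefficient of `x^k` (`k < n`) in `h·G(n, r)` is the coefficient of
`x^(k mod r)` in `h`. So in a unital decomposition the monomial `x^5` of `f` comes from one of
`h₃₅, h₂₁, h₁₅`, which then also contributes `x^75`, `x^26` or `x^20` respectively; these are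
absent from `f`, and coefficients in `{0, 1}` cannot cancel.
-/

open Polynomial

/-- A polynomial is unital if all of its coefficients lie in `{0, 1}`. -/
def IsUnitalPoly (f : Polynomial ℤ) : Prop :=
  ∀ i : ℕ, f.coeff i = 0 ∨ f.coeff i = 1

/-- The explicit counterexample
`f(x) = x^5+x^6+x^10+x^25+x^27+x^35+x^40+x^48+x^50+x^65+x^69+x^70+x^80+x^85+x^95+x^100`. -/
noncomputable def fCounter : Polynomial ℤ :=
  X ^ 5 + X ^ 6 + X ^ 10 + X ^ 25 + X ^ 27 + X ^ 35 + X ^ 40 + X ^ 48 + X ^ 50 +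
    X ^ 65 + X ^ 69 + X ^ 70 + X ^ 80 + X ^ 85 + X ^ 95 + X ^ 100

lemma Gpoly_mul_X_pow_sub_one {R : Type*} [CommRing R] {n r : ℕ} (hrn : r ∣ n) :
    Gpoly R n r * (X ^ r - 1) = X ^ n - 1 := by
  simp_rw [Gpoly, mul_comm _ r, pow_mul, geom_sum_mul, ← pow_mul, Nat.mul_div_cancel' hrn]

lemma cyclotomic_dvd_Gpoly {R : Type*} [CommRing R] [IsDomain R] {n r : ℕ} (hrn : r ∣ n)
    (hr : r < n) : cyclotomic n R ∣ Gpoly R n r := by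
  have hr0 : 0 < r := Nat.pos_of_dvd_of_pos hrn (by omega)
  have hGpoly : Gpoly R n r = ∏ d ∈ n.divisors \ r.divisors, cyclotomic d R := by
    refine mul_right_cancel₀ (X_pow_sub_C_ne_zero hr0 (1 : R)) ?_
    rw [map_one, Gpoly_mul_X_pow_sub_one hrn, mul_comm,
      X_pow_sub_one_mul_prod_cyclotomic_eq_X_pow_sub_one_of_dvd R hrn (by omega)]
  rw [hGpoly]
  refine Finset.dvd_prod_of_mem _ (Finset.mem_sdiff.mpr ⟨Nat.mem_divisors_self n (by omega), ?_⟩)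
  exact fun hn => absurd (Nat.divisor_le hn) (not_le.mpr hr)

lemma coeff_mul_Gpoly {R : Type*} [Semiring R] {n r k : ℕ} {h : R[X]} (hrn : r ∣ n)
    (hh : h.degree < r) (hk : k < n) : (h * Gpoly R n r).coeff k = h.coeff (k % r) := by
  have hr : 0 < r := Nat.pos_of_dvd_of_pos hrn (by omega)
  rw [Gpoly, Finset.mul_sum, finsetSum_coeff, Finset.sum_eq_single (k / r)]
  · rw [coeff_mul_X_pow', if_pos (Nat.div_mul_le_self k r), Nat.mod_eq_sub_div_mul]
  · intro l _ hl
    rw [coeff_mul_X_pow']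
    split_ifs with hlk
    · have hlt : (l + 1) * r ≤ k := by
        rw [← Nat.le_div_iff_mul_le hr]
        exact lt_of_le_of_ne ((Nat.le_div_iff_mul_le hr).mpr hlk) hl
      have hle : r ≤ k - l * r := by rw [add_mul] at hlt; omega
      exact coeff_eq_zero_of_degree_lt (hh.trans_le (by exact_mod_cast hle))
    · rfl
  · intro hkr
    exact absurd (Finset.mem_range.mpr (Nat.div_lt_div_of_lt_of_dvd hrn hk)) hkr

lemma coeff_sum_X_pow {R : Type*} [Semiring R] (s : Finset ℕ) (k : ℕ) :
    (∑ i ∈ s, (X : R[X]) ^ i).coeff k = if k ∈ s then 1 else 0 := by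
  simp [finsetSum_coeff, coeff_X_pow]

lemma fCounter_eq_sum :
    fCounter = ∑ i ∈ {5, 6, 10, 25, 27, 35, 40, 48, 50, 65, 69, 70, 80, 85, 95, 100}, X ^ i := by
  simp [fCounter, add_assoc]

lemma fCounter_coeff (k : ℕ) : fCounter.coeff k =
    if k ∈ ({5, 6, 10, 25, 27, 35, 40, 48, 50, 65, 69, 70, 80, 85, 95, 100} : Finset ℕ) then 1
    else 0 := by
  rw [fCounter_eq_sum, coeff_sum_X_pow]

lemma isUnitalPoly_fCounter : IsUnitalPoly fCounter := fun i => by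
  rw [fCounter_coeff]; split_ifs <;> simp

lemma degree_fCounter_lt : fCounter.degree < 105 := by
  refine (degree_lt_iff_coeff_zero _ 105).mpr fun k hk => ?_
  rw [fCounter_coeff, if_neg]
  simp only [Finset.mem_insert, Finset.mem_singleton]
  omega

lemma fCounter_eq_decomposition : fCounter =
    (1 + X ^ 5 + X ^ 10 + X ^ 15 + X ^ 25 + X ^ 30) * Gpoly ℤ 105 35
      + X ^ 6 * Gpoly ℤ 105 21 - Gpoly ℤ 105 15 := by
  simp only [fCounter, Gpoly, Finset.sum_range_succ, Finset.sum_range_zero]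
  ring

lemma cyclotomic_dvd_fCounter : cyclotomic 105 ℤ ∣ fCounter := by
  rw [fCounter_eq_decomposition]
  refine dvd_sub (dvd_add (dvd_mul_of_dvd_right ?_ _) (dvd_mul_of_dvd_right ?_ _)) ?_ <;>
    exact cyclotomic_dvd_Gpoly (by norm_num) (by norm_num)

lemma IsUnitalPoly.coeff_nonneg {f : ℤ[X]} (hf : IsUnitalPoly f) (i : ℕ) : 0 ≤ f.coeff i := by
  rcases hf i with h | h <;> simp [h]

lemma not_exists_unital_decomposition {f : ℤ[X]} (h5 : f.coeff 5 = 1) (h20 : f.coeff 20 = 0)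
    (h26 : f.coeff 26 = 0) (h75 : f.coeff 75 = 0) :
    ¬ ∃ h35 h21 h15 : Polynomial ℤ,
      IsUnitalPoly h35 ∧ IsUnitalPoly h21 ∧ IsUnitalPoly h15 ∧
      h35.degree < 35 ∧ h21.degree < 21 ∧ h15.degree < 15 ∧
      f = h35 * Gpoly ℤ 105 35 + h21 * Gpoly ℤ 105 21 + h15 * Gpoly ℤ 105 15 := by
  rintro ⟨h35, h21, h15, u35, u21, u15, d35, d21, d15, rfl⟩
  have hcoeff (k : ℕ) (hk : k < 105) :
      (h35 * Gpoly ℤ 105 35 + h21 * Gpoly ℤ 105 21 + h15 * Gpoly ℤ 105 15).coeff k =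
        h35.coeff (k % 35) + h21.coeff (k % 21) + h15.coeff (k % 15) := by
    rw [coeff_add, coeff_add, coeff_mul_Gpoly (by norm_num) d35 hk,
      coeff_mul_Gpoly (by norm_num) d21 hk, coeff_mul_Gpoly (by norm_num) d15 hk]
  rw [hcoeff 5 (by norm_num)] at h5
  rw [hcoeff 20 (by norm_num)] at h20
  rw [hcoeff 26 (by norm_num)] at h26
  rw [hcoeff 75 (by norm_num)] at h75
  norm_num at h5 h20 h26 h75
  have := u35.coeff_nonneg 20; have := u21.coeff_nonneg 20
  have := u35.coeff_nonneg 26; have := u15.coeff_nonneg 11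
  have := u21.coeff_nonneg 12; have := u15.coeff_nonneg 0
  have := u35.coeff_nonneg 5; have := u21.coeff_nonneg 5; have := u15.coeff_nonneg 5
  linarith

theorem stmt_14 :
    ∃ f : Polynomial ℤ, f = fCounter ∧
      IsUnitalPoly f ∧ f.degree < 105 ∧ cyclotomic 105 ℤ ∣ f ∧
      ¬ ∃ h35 h21 h15 : Polynomial ℤ,
          IsUnitalPoly h35 ∧ IsUnitalPoly h21 ∧ IsUnitalPoly h15 ∧
          h35.degree < 35 ∧ h21.degree < 21 ∧ h15.degree < 15 ∧
          f = h35 * Gpoly ℤ 105 35 + h21 * Gpoly ℤ 105 21 + h15 * Gpoly ℤ 105 15 :=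
  ⟨fCounter, rfl, isUnitalPoly_fCounter, degree_fCounter_lt, cyclotomic_dvd_fCounter,
    not_exists_unital_decomposition (by simp [fCounter_coeff]) (by simp [fCounter_coeff])
      (by simp [fCounter_coeff]) (by simp [fCounter_coeff])⟩
end
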